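/- arXiv:1310.5027 — 8 statements merged into one kernel-verified Lean document; each statement's English description precedes it below -/
import Mathlib

section
/- Let p be a prime number, m a natural number, and A a commutative ring in which p^m · A = 0. Let I be an ideal of A equipped with a divided power structure. Then for every x ∈ A and every a ∈ I one has (x + a)^(p^m) = x^(p^m). -/
/-!
Expand `(x + a) ^ N` binomially with `N = p ^ m`. For `k ≥ 1` the coefficient `N.choose k`
combines with `a ^ k = k! • γ_k(a)` into the descending factorial `N (N - 1) ⋯ (N - k + 1)`,
which is a multiple of `N`, hence zero in `A`; only the term `x ^ N` survives.
-/

theorem Nat.dvd_descFactorial_self (n : ℕ) {k : ℕ} (hk : k ≠ 0) : n ∣ n.descFactorial k := by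
  obtain ⟨k, rfl⟩ := Nat.exists_eq_succ_of_ne_zero hk
  cases n with
  | zero => simp
  | succ n => exact ⟨_, Nat.succ_descFactorial_succ n k⟩

namespace DividedPowers

variable {A : Type*} [CommSemiring A] {I : Ideal A} {a : A}

theorem choose_mul_pow_eq_descFactorial_mul_dpow (hI : DividedPowers I) (ha : a ∈ I)
    (n k : ℕ) :
    (n.choose k : A) * a ^ k = n.descFactorial k * hI.dpow k a := by
  rw [← hI.factorial_mul_dpow_eq_pow ha, Nat.descFactorial_eq_factorial_mul_choose]
  push_cast
  ring

theorem add_pow_eq_pow_of_natCast_eq_zero (hI : DividedPowers I) {n : ℕ} (hn : (n : A) = 0)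
    (x : A) (ha : a ∈ I) :
    (x + a) ^ n = x ^ n := by
  have hterm : ∀ k, a ^ (k + 1) * x ^ (n - (k + 1)) * (n.choose (k + 1) : A) = 0 := fun k ↦ by
    obtain ⟨c, hc⟩ := n.dvd_descFactorial_self k.succ_ne_zero
    rw [mul_right_comm, mul_comm _ (n.choose _ : A),
      hI.choose_mul_pow_eq_descFactorial_mul_dpow ha, hc]
    push_cast [hn]
    ring
  rw [add_comm, add_pow, Finset.sum_range_succ']
  simp [hterm]

end DividedPowers

theorem statement0_general (p : ℕ) (m : ℕ) (A : Type*) [CommRing A]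
    (hpm : (p : A) ^ m = 0) (I : Ideal A) (hI : DividedPowers I)
    (x a : A) (ha : a ∈ I) :
    (x + a) ^ (p ^ m) = x ^ (p ^ m) :=
  hI.add_pow_eq_pow_of_natCast_eq_zero (by rw [Nat.cast_pow, hpm]) x ha

/-- Let `p` be a prime, `m : ℕ`, and `A` a commutative ring with
`p ^ m • A = 0` (i.e. `(p : A) ^ m = 0`).  Let `I` be an ideal of `A` equipped with a
divided power structure.  Then for every `x ∈ A` and `a ∈ I` one has
`(x + a) ^ (p ^ m) = x ^ (p ^ m)`. -/
theorem statement0 (p : ℕ) (hp : p.Prime) (m : ℕ) (A : Type*) [CommRing A]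
    (hpm : (p : A) ^ m = 0) (I : Ideal A) (hI : DividedPowers I)
    (x a : A) (ha : a ∈ I) :
    (x + a) ^ (p ^ m) = x ^ (p ^ m) :=
  statement0_general p m A hpm I hI x a ha
end

section
/- Let p be a prime, m ≥ 1, and A a commutative ring with p^m · A = 0. Let I ⊆ A be an ideal containing p and equipped with a divided power structure, and set R := A/I (a ring of characteristic p). Then the map W_m(R) → A sending a truncated Witt vector (r_0, …, r_{m−1}) to Σ_{i=0}^{m−1} p^i · (r̂_i)^{p^{m−i}}, where r̂_i ∈ A is any element whose residue in R is r_i, is independent of the choice of the lifts r̂_i and defines a ring homomorphism θ : W_m(R) → A. Moreover, if the Frobenius endomorphism of R is surjective, then θ is the unique ring homomorphism W_m(R) → A whose composite with the projection A → R sends (r_0, …, r_{m−1}) to r_0^(p^m). -/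
/-!
The `m`-th ghost component `x ↦ ∑_{i ≤ m} p ^ i x_i ^ p ^ (m - i)` of `W(A)` loses its last term
because `p ^ m = 0`, and each remaining term depends only on `x_i` modulo `I`: for `d ∈ I` and
`N = p ^ (m - i)`, the terms with `k ≥ 1` of the binomial expansion of `(b + d) ^ N` are
`C(N, k) k! γ_k(d) b ^ (N - k)`, and `N ∣ k! C(N, k)`. Hence the ghost component descends to a ring
map `θ : W_m(A ⧸ I) → A`, and reducing modulo `I ∋ p` leaves only `x_0 ^ p ^ m`. If Frobenius is
surjective on `R`, every element of `W_m(R)` is a sum of `p ^ i [t_i] ^ p ^ (m - i)`; a ring map to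
`A` is determined on such a term by its value on `[t_i]` modulo `I`, by the same estimate.
-/

open Finset

namespace DividedPowers

variable {A : Type*} [CommRing A] {I : Ideal A}

theorem mul_pow_eq_mul_pow_of_sub_mem (hI : DividedPowers I) {c : A} {n : ℕ}
    (hc : c * n = 0) {a b : A} (hab : a - b ∈ I) : c * a ^ n = c * b ^ n := by
  obtain ⟨d, hd, rfl⟩ : ∃ d ∈ I, a = d + b := ⟨a - b, hab, by ring⟩
  rw [add_pow, mul_sum, sum_eq_single_of_mem 0 (mem_range.2 n.succ_pos)]
  · simp
  · rintro (_ | k) - hk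
    · exact absurd rfl hk
    obtain ⟨q, hq⟩ : n ∣ (k + 1).factorial * n.choose (k + 1) := by
      rw [← Nat.descFactorial_eq_factorial_mul_choose]
      cases n with
      | zero => simp
      | succ n => exact Nat.succ_descFactorial_succ n k ▸ dvd_mul_right _ _
    have hq' : ((k + 1).factorial : A) * n.choose (k + 1) = n * q := by
      rw [← Nat.cast_mul, hq, Nat.cast_mul]
    rw [← hI.factorial_mul_dpow_eq_pow hd]
    linear_combination (c * hI.dpow (k + 1) d * b ^ (n - (k + 1))) * hq' +
      (hI.dpow (k + 1) d * b ^ (n - (k + 1)) * q) * hc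

theorem pow_mul_pow_pow_eq_of_sub_mem (hI : DividedPowers I) {p m i : ℕ}
    (hpm : (p : A) ^ m = 0) (him : i ≤ m) {a b : A} (hab : a - b ∈ I) :
    (p : A) ^ i * a ^ p ^ (m - i) = (p : A) ^ i * b ^ p ^ (m - i) :=
  hI.mul_pow_eq_mul_pow_of_sub_mem
    (by rw [Nat.cast_pow, ← pow_add, Nat.add_sub_cancel' him, hpm]) hab

end DividedPowers

namespace WittVector

variable {p : ℕ} [Fact p.Prime]

section Lift

variable {A : Type*} [CommRing A]

theorem truncate_comp_map_mk_surjective (m : ℕ) (I : Ideal A) :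
    Function.Surjective ((truncate m).comp (map (p := p) (Ideal.Quotient.mk I))) :=
  (truncate_surjective p m _).comp (map_surjective _ Ideal.Quotient.mk_surjective)

variable {I : Ideal A} {m : ℕ}

theorem ghostComponent_eq_sum_of_coeff_sub_mem (hI : DividedPowers I)
    (hpm : (p : A) ^ m = 0) (x : WittVector p A) (f : Fin m → A)
    (hf : ∀ i : Fin m, x.coeff i - f i ∈ I) :
    ghostComponent m x = ∑ i : Fin m, (p : A) ^ (i : ℕ) * f i ^ p ^ (m - i) := by
  rw [ghostComponent_apply, aeval_wittPolynomial, sum_range_succ, hpm, zero_mul, add_zero,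
    sum_range]
  exact sum_congr rfl fun i _ => hI.pow_mul_pow_pow_eq_of_sub_mem hpm i.isLt.le (hf i)

noncomputable def liftGhostComponent (hI : DividedPowers I) (hpm : (p : A) ^ m = 0) :
    TruncatedWittVector p m (A ⧸ I) →+* A :=
  RingHom.liftOfSurjective _ (truncate_comp_map_mk_surjective m I)
    ⟨ghostComponent m, fun x hx => by
      have hx0 : ∀ i : Fin m, x.coeff i - 0 ∈ I := fun i => by
        simpa [← Ideal.Quotient.eq_zero_iff_mem] using
          congrArg (TruncatedWittVector.coeff i) (RingHom.mem_ker.1 hx)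
      rw [RingHom.mem_ker, ghostComponent_eq_sum_of_coeff_sub_mem hI hpm x 0 hx0]
      exact sum_eq_zero fun i _ => by
        rw [Pi.zero_apply, zero_pow (pow_ne_zero _ (Fact.out : p.Prime).ne_zero), mul_zero]⟩

theorem liftGhostComponent_apply (hI : DividedPowers I) (hpm : (p : A) ^ m = 0)
    (w : TruncatedWittVector p m (A ⧸ I)) (f : Fin m → A)
    (hf : ∀ i, Ideal.Quotient.mk I (f i) = w.coeff i) :
    liftGhostComponent hI hpm w = ∑ i : Fin m, (p : A) ^ (i : ℕ) * f i ^ p ^ (m - i) := by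
  obtain ⟨x, rfl⟩ := truncate_comp_map_mk_surjective (p := p) m I w
  rw [liftGhostComponent, RingHom.liftOfSurjective_comp_apply]
  refine ghostComponent_eq_sum_of_coeff_sub_mem hI hpm x f fun i => Ideal.Quotient.eq.1 ?_
  simp [hf]

theorem mk_liftGhostComponent (hI : DividedPowers I) (hpm : (p : A) ^ m = 0)
    (hpI : (p : A) ∈ I) (hm : 0 < m) (w : TruncatedWittVector p m (A ⧸ I)) :
    Ideal.Quotient.mk I (liftGhostComponent hI hpm w) = w.coeff ⟨0, hm⟩ ^ p ^ m := by
  rw [liftGhostComponent_apply hI hpm w _ fun i => Ideal.Quotient.mk_out (w.coeff i), map_sum,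
    sum_eq_single_of_mem ⟨0, hm⟩ (mem_univ _)]
  · simp
  · intro i _ hi
    have hi0 : (i : ℕ) ≠ 0 := fun h => hi (Fin.ext h)
    rw [map_mul, map_pow, Ideal.Quotient.eq_zero_iff_mem.2 hpI, zero_pow hi0, zero_mul]

end Lift

section Uniqueness

variable {R : Type*} [CommRing R] [CharP R p]

theorem truncate_eq_sum_teichmuller_mul_pow {m : ℕ} (x : WittVector p R) (s : ℕ → R)
    (hs : ∀ i < m, s i ^ p ^ i = x.coeff i) :
    truncate m x =
      ∑ i ∈ range m, truncate m (teichmuller p (s i) * (p : WittVector p R) ^ i) := by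
  rw [← map_sum]
  refine TruncatedWittVector.ext fun n => ?_
  have hsupp : ∀ k, {i | i ∈ range m ∧
      (teichmuller p (s i) * (p : WittVector p R) ^ i).coeff k ≠ 0} ⊆ {k} := fun k i hi =>
    of_not_not fun hik => hi.2 (teichmuller_mul_pow_coeff_of_ne _ (Ne.symm hik))
  rw [coeff_truncate, coeff_truncate,
    sum_coeff_eq_coeff_sum _ fun k => (Set.subsingleton_singleton.anti (hsupp k)).coe_sort,
    sum_eq_single_of_mem (n : ℕ) (mem_range.2 n.isLt), teichmuller_mul_pow_coeff, hs n n.isLt]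
  exact fun i _ hi => teichmuller_mul_pow_coeff_of_ne _ (Ne.symm hi)

theorem ringHom_ext_of_teichmuller_sub_mem (hR : Function.Surjective fun r : R => r ^ p)
    {A : Type*} [CommRing A] {I : Ideal A} (hI : DividedPowers I) {m : ℕ}
    (hpm : (p : A) ^ m = 0) {φ ψ : TruncatedWittVector p m R →+* A}
    (h : ∀ t, φ (truncate m (teichmuller p t)) - ψ (truncate m (teichmuller p t)) ∈ I) :
    φ = ψ := by
  ext w
  obtain ⟨x, rfl⟩ := truncate_surjective p m R w
  have hRm : Function.Surjective fun r : R => r ^ p ^ m := by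
    simpa [← pow_iterate] using hR.iterate m
  choose t ht using fun i => hRm (x.coeff i)
  rw [truncate_eq_sum_teichmuller_mul_pow x (fun i => t i ^ p ^ (m - i)) fun i hi => by
    rw [← pow_mul, ← pow_add, Nat.sub_add_cancel hi.le]; exact ht i]
  simp only [map_sum, map_mul, map_pow, map_natCast]
  exact sum_congr rfl fun i hi => by
    rw [mul_comm (φ _ ^ _), mul_comm (ψ _ ^ _)]
    exact hI.pow_mul_pow_pow_eq_of_sub_mem hpm (mem_range.1 hi).le (h (t i))

end Uniqueness

end WittVector

/-- Let `p` be a prime, `m ≥ 1`, and `A` a commutative ring with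
`p ^ m • A = 0`.  Let `I ⊆ A` be an ideal containing `p` equipped with a divided power
structure, and set `R := A ⧸ I`.  Then there is a (necessarily unique) ring homomorphism
`θ : W_m(R) →+* A` such that for every truncated Witt vector `w` and every choice of
lifts `f i ∈ A` of the coefficients `w.coeff i`, one has
`θ w = ∑ i, p ^ i * (f i) ^ (p ^ (m - i))` (in particular the latter expression is
independent of the choice of the lifts and defines a ring homomorphism);  moreover, if
the Frobenius endomorphism of `R` is surjective, then `θ` is the unique ring homomorphism
`W_m(R) →+* A` whose composite with the projection `A → R` sends
`(r_0, …, r_{m-1})` to `r_0 ^ (p ^ m)`. -/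
theorem statement1 (p : ℕ) [Fact p.Prime] (m : ℕ) (hm : 1 ≤ m)
    (A : Type*) [CommRing A] (hpm : (p : A) ^ m = 0)
    (I : Ideal A) (hpI : (p : A) ∈ I) (hI : DividedPowers I) :
    ∃ θ : TruncatedWittVector p m (A ⧸ I) →+* A,
      (∀ (w : TruncatedWittVector p m (A ⧸ I)) (f : Fin m → A),
          (∀ i, Ideal.Quotient.mk I (f i) = w.coeff i) →
          θ w = ∑ i : Fin m, (p : A) ^ (i : ℕ) * f i ^ p ^ (m - (i : ℕ))) ∧
      ((Function.Surjective fun x : A ⧸ I => x ^ p) →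
        (∀ w : TruncatedWittVector p m (A ⧸ I),
            Ideal.Quotient.mk I (θ w) = w.coeff ⟨0, hm⟩ ^ p ^ m) ∧
        ∀ θ' : TruncatedWittVector p m (A ⧸ I) →+* A,
          (∀ w : TruncatedWittVector p m (A ⧸ I),
              Ideal.Quotient.mk I (θ' w) = w.coeff ⟨0, hm⟩ ^ p ^ m) → θ' = θ) := by
  refine ⟨WittVector.liftGhostComponent hI hpm, WittVector.liftGhostComponent_apply hI hpm,
    fun hR => ⟨WittVector.mk_liftGhostComponent hI hpm hpI hm, fun θ' hθ' => ?_⟩⟩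
  rcases subsingleton_or_nontrivial (A ⧸ I) with _ | _
  · refine RingHom.ext fun w => ?_
    rw [show w = 0 from TruncatedWittVector.ext fun _ => Subsingleton.elim _ _, map_zero,
      map_zero]
  · have : CharP (A ⧸ I) p := (CharP.charP_iff_prime_eq_zero Fact.out).2 <| by
      simpa using Ideal.Quotient.eq_zero_iff_mem.2 hpI
    refine WittVector.ringHom_ext_of_teichmuller_sub_mem hR hI hpm fun t =>
      Ideal.Quotient.eq.1 ?_
    rw [hθ', WittVector.mk_liftGhostComponent hI hpm hpI hm]
end

section
/- Let p be a prime and let Λ be a valuation ring of characteristic zero with maximal ideal 𝔪, such that p ∈ 𝔪 and 𝔪² = 𝔪. In the ring of p-typical Witt vectors W(Λ/pΛ), let [𝔪] denote the ideal generated by the set of Teichmüller representatives { [x̄] : x ∈ 𝔪 }, where x̄ denotes the residue of x in Λ/pΛ. Then [𝔪]² = [𝔪]. -/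
/-- In a valuation ring, an element of `I * J` is divisible by `a * b` for some
`a ∈ I`, `b ∈ J`. -/
theorem val_factor {Λ : Type*} [CommRing Λ] [IsDomain Λ] [ValuationRing Λ]
    (I J : Ideal Λ) (x : Λ) (hx : x ∈ I * J) (aI : Λ) (haI : aI ∈ I) (bJ : Λ) (hbJ : bJ ∈ J) :
    ∃ a ∈ I, ∃ b ∈ J, a * b ∣ x := by
  refine Submodule.mul_induction_on hx (fun a ha b hb => ⟨a, ha, b, hb, dvd_refl _⟩) ?_
  intro x y hx hy
  obtain ⟨a, ha, b, hb, hd⟩ := hx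
  obtain ⟨a', ha', b', hb', hd'⟩ := hy
  rcases ValuationRing.cond (a * b) (a' * b') with ⟨c, hc | hc⟩
  · exact ⟨a, ha, b, hb, dvd_add hd (Dvd.dvd.trans ⟨c, hc.symm⟩ hd')⟩
  · exact ⟨a', ha', b', hb', dvd_add (Dvd.dvd.trans ⟨c, hc.symm⟩ hd) hd'⟩

/-- Let `p` be a prime and `Λ` a valuation ring of characteristic zero
with maximal ideal `𝔪` such that `p ∈ 𝔪` and `𝔪 ^ 2 = 𝔪`.  In the ring of `p`-typical
Witt vectors `W(Λ/pΛ)`, the ideal `[𝔪]` generated by the Teichmüller representatives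
`[x̄]` of residues of elements `x ∈ 𝔪` satisfies `[𝔪] ^ 2 = [𝔪]`. -/
theorem statement2 (p : ℕ) [Fact p.Prime]
    (Λ : Type*) [CommRing Λ] [IsDomain Λ] [ValuationRing Λ] [CharZero Λ]
    (hp : (p : Λ) ∈ IsLocalRing.maximalIdeal Λ)
    (hm : (IsLocalRing.maximalIdeal Λ) ^ 2 = IsLocalRing.maximalIdeal Λ) :
    (Ideal.span ((fun x : Λ => WittVector.teichmuller p
        (Ideal.Quotient.mk (Ideal.span {(p : Λ)}) x)) ''
        (IsLocalRing.maximalIdeal Λ : Set Λ))) ^ 2 =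
      Ideal.span ((fun x : Λ => WittVector.teichmuller p
        (Ideal.Quotient.mk (Ideal.span {(p : Λ)}) x)) ''
        (IsLocalRing.maximalIdeal Λ : Set Λ)) := by
  set 𝔪 := IsLocalRing.maximalIdeal Λ
  set f : Λ → WittVector p (Λ ⧸ Ideal.span {(p : Λ)}) :=
    fun x => WittVector.teichmuller p (Ideal.Quotient.mk (Ideal.span {(p : Λ)}) x) with hf
  apply le_antisymm
  · rw [pow_two]
    exact Ideal.mul_le_left
  · rw [Ideal.span_le]
    rintro _ ⟨x, hx, rfl⟩
    -- factor x = a * m with a, m ∈ 𝔪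
    have hx2 : x ∈ 𝔪 * 𝔪 := by rw [← pow_two, hm]; exact hx
    obtain ⟨a, ha, b, hb, c, hc⟩ := val_factor 𝔪 𝔪 x hx2 (p : Λ) hp (p : Λ) hp
    have hbc : b * c ∈ 𝔪 := Ideal.mul_mem_right _ _ hb
    have hfx : f x = f a * f (b * c) := by
      simp only [hf, hc, mul_assoc, map_mul]
    rw [SetLike.mem_coe, pow_two, hfx]
    exact Ideal.mul_mem_mul (Ideal.subset_span ⟨a, ha, rfl⟩)
      (Ideal.subset_span ⟨b * c, hbc, rfl⟩)
end

section
/- Let p be a prime and let A be an integrally closed domain of characteristic zero in which p is not a unit. Assume that the Frobenius endomorphism of A/pA is surjective and that there exists a sequence (s_n)_{n≥0} of elements of A with s_0 = p and (s_{n+1})^p = s_n for all n. Let p̲ denote the element of the perfection of A/pA whose n-th component is the residue of s_n in A/pA. Then the kernel of the ring homomorphism from the perfection of A/pA to A/pA given by projection onto the 0-th component is the principal ideal generated by p̲. -/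
/-!
Write `π : A → A/pA`. If `x` lies in the kernel of the `0`-th projection, then
`(x_n)^(p^n) = x_0 = 0`, so `x_n = π a` with `p = s_n^(p^n)` dividing `a^(p^n)`; as `A` is
integrally closed this gives `s_n ∣ a`, i.e. `x_n = π (s_n) c_n`. The elements `c_n` are only
determined up to the annihilator of `π (s_n)`, but that annihilator is killed by Frobenius, so
`y_n := c_(n+1)^p` is a well-defined compatible system and `x = p̲ y`.
-/

open Ideal Perfection

theorem pow_pow_eq_of_pow_succ_eq {M : Type*} [Monoid M] {p : ℕ} {s : ℕ → M}
    (hs : ∀ n, s (n + 1) ^ p = s n) (n : ℕ) : s n ^ p ^ n = s 0 := by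
  induction n with
  | zero => simp
  | succ n ih => rw [pow_succ', pow_mul, hs n, ih]

namespace Ideal.Quotient

variable {A : Type*} [CommRing A] [IsDomain A] {q t : A} {N : ℕ}

theorem mk_dvd_of_pow_eq_zero [IsIntegrallyClosed A] (hN : N ≠ 0) (ht : t ^ N = q)
    {b : A ⧸ span {q}} (hb : b ^ N = 0) : mk (span {q}) t ∣ b := by
  obtain ⟨a, rfl⟩ := mk_surjective b
  rw [← map_pow, eq_zero_iff_mem, mem_span_singleton, ← ht,
    IsIntegrallyClosed.pow_dvd_pow_iff hN] at hb
  exact map_dvd _ hb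

theorem pow_eq_zero_of_mk_mul_eq_zero {k : ℕ} (ht0 : t ≠ 0) (ht : t ^ N = q) (hN : N ≠ 0)
    (hNk : N ≤ (N - 1) * k) {c : A ⧸ span {q}} (hc : mk (span {q}) t * c = 0) : c ^ k = 0 := by
  obtain ⟨a, rfl⟩ := mk_surjective c
  rw [← map_mul, eq_zero_iff_mem, mem_span_singleton] at hc
  obtain ⟨d, hd⟩ := hc
  have ha : a = t ^ (N - 1) * d := by
    apply mul_left_cancel₀ ht0
    rw [hd, ← ht, ← mul_assoc, ← pow_succ', Nat.sub_add_cancel (Nat.one_le_iff_ne_zero.2 hN)]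
  rw [← map_pow, eq_zero_iff_mem, mem_span_singleton, ha, mul_pow, ← pow_mul, ← ht]
  exact (pow_dvd_pow t hNk).mul_right _

theorem pow_char_eq_of_mk_mul_eq {p : ℕ} [Fact p.Prime] [CharP (A ⧸ span {q}) p] (ht0 : t ≠ 0)
    (ht : t ^ N = q) (hN : N ≠ 0) (hNp : N ≤ (N - 1) * p) {c c' : A ⧸ span {q}}
    (h : mk (span {q}) t * c = mk (span {q}) t * c') : c ^ p = c' ^ p := by
  rw [← sub_eq_zero, ← sub_pow_char]
  exact pow_eq_zero_of_mk_mul_eq_zero ht0 ht hN hNp (by rw [mul_sub, h, sub_self])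

end Ideal.Quotient

namespace Perfection

variable {B : Type*} [CommRing B] {p : ℕ} [Fact p.Prime] [CharP B p]

theorem ker_coeff_zero_eq_span {ϖ : Perfection B p} (hϖ : coeff B p 0 ϖ = 0)
    (hdvd : ∀ n (b : B), b ^ p ^ n = 0 → coeff B p n ϖ ∣ b)
    (hcancel : ∀ n (c c' : B), coeff B p (n + 1) ϖ * c = coeff B p (n + 1) ϖ * c' →
      c ^ p = c' ^ p) :
    RingHom.ker (coeff B p 0) = span {ϖ} := by
  ext x
  rw [RingHom.mem_ker, mem_span_singleton]
  refine ⟨fun hx ↦ ?_, fun ⟨y, hy⟩ ↦ by rw [hy, map_mul, hϖ, zero_mul]⟩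
  have hnil (n : ℕ) : coeff B p n x ^ p ^ n = 0 := by
    rw [← hx]; exact coeffMonoidHom_pow_p_pow_self x n
  choose c hc using fun n ↦ hdvd (n + 1) _ (hnil (n + 1))
  have hcompat (n : ℕ) : (c (n + 1) ^ p) ^ p = c n ^ p := by
    apply hcancel n
    rw [← hc n, ← coeff_pow_p' x (n + 1), hc (n + 1), mul_pow, coeff_pow_p']
  let y : Perfection B p := ⟨fun n ↦ c n ^ p, hcompat⟩
  refine ⟨y, ext fun n ↦ ?_⟩
  rw [map_mul, show coeff B p n y = c n ^ p from rfl, ← coeff_pow_p' ϖ n, ← mul_pow, ← hc n,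
    coeff_pow_p']

end Perfection

theorem statement5_general (p : ℕ) [hp : Fact p.Prime] (A : Type*) [CommRing A] [IsDomain A]
    [IsIntegrallyClosed A] [CharZero A] (hpu : (p : A) ∈ nonunits A)
    (s : ℕ → A) (hs0 : s 0 = (p : A)) (hs : ∀ n, s (n + 1) ^ p = s n) :
    haveI : CharP (A ⧸ Ideal.span {(p : A)}) p := CharP.quotient A p hpu
    ∀ pbar : Perfection (A ⧸ Ideal.span {(p : A)}) p,
      (∀ n, Perfection.coeff (A ⧸ Ideal.span {(p : A)}) p n pbar =
          Ideal.Quotient.mk (Ideal.span {(p : A)}) (s n)) →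
      RingHom.ker (Perfection.coeff (A ⧸ Ideal.span {(p : A)}) p 0) =
        Ideal.span {pbar} := by
  have : CharP (A ⧸ Ideal.span {(p : A)}) p := CharP.quotient A p hpu
  intro pbar hpbar
  have hsp (n : ℕ) : s n ^ p ^ n = p := hs0 ▸ pow_pow_eq_of_pow_succ_eq hs n
  have hpn (n : ℕ) : p ^ n ≠ 0 := pow_ne_zero n hp.out.ne_zero
  have hs_ne (n : ℕ) : s n ≠ 0 := fun h ↦
    (Nat.cast_ne_zero (R := A)).2 hp.out.ne_zero (by rw [← hsp n, h, zero_pow (hpn n)])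
  have hpn_le (n : ℕ) : p ^ (n + 1) ≤ (p ^ (n + 1) - 1) * p := by
    have h2p := hp.out.two_le
    have : 2 ≤ p ^ (n + 1) := h2p.trans (Nat.le_self_pow n.succ_ne_zero p)
    have : 2 * (p ^ (n + 1) - 1) ≤ (p ^ (n + 1) - 1) * p := by
      rw [mul_comm]; exact Nat.mul_le_mul_left _ h2p
    omega
  refine ker_coeff_zero_eq_span ?_ (fun n b hb ↦ ?_) (fun n c c' h ↦ ?_)
  · rw [hpbar, hs0, Quotient.eq_zero_iff_mem]
    exact subset_span rfl
  · rw [hpbar]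
    exact Quotient.mk_dvd_of_pow_eq_zero (hpn n) (hsp n) hb
  · rw [hpbar] at h
    exact Quotient.pow_char_eq_of_mk_mul_eq (hs_ne _) (hsp _) (hpn _) (hpn_le n) h

/-- Let `p` be a prime and `A` an integrally closed domain of
characteristic zero in which `p` is not a unit.  Assume the Frobenius endomorphism of
`A/pA` is surjective and that there is a sequence `(s n)` in `A` with `s 0 = p` and
`s (n+1) ^ p = s n`.  Let `p̲` be the element of the perfection of `A/pA` whose `n`-th
component is the residue of `s n`.  Then the kernel of the projection of the perfection
of `A/pA` onto its `0`-th component is the principal ideal generated by `p̲`. -/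
theorem statement5 (p : ℕ) [hp : Fact p.Prime] (A : Type*) [CommRing A] [IsDomain A]
    [IsIntegrallyClosed A] [CharZero A] (hpu : (p : A) ∈ nonunits A)
    (hF : Function.Surjective fun x : A ⧸ Ideal.span {(p : A)} => x ^ p)
    (s : ℕ → A) (hs0 : s 0 = (p : A)) (hs : ∀ n, s (n + 1) ^ p = s n) :
    haveI : CharP (A ⧸ Ideal.span {(p : A)}) p := CharP.quotient A p hpu
    ∀ pbar : Perfection (A ⧸ Ideal.span {(p : A)}) p,
      (∀ n, Perfection.coeff (A ⧸ Ideal.span {(p : A)}) p n pbar =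
          Ideal.Quotient.mk (Ideal.span {(p : A)}) (s n)) →
      RingHom.ker (Perfection.coeff (A ⧸ Ideal.span {(p : A)}) p 0) =
        Ideal.span {pbar} :=
  statement5_general p (hp := hp) A hpu s hs0 hs
end

section
/- Let p be a prime and let K⁺ be a complete discrete valuation ring of characteristic zero whose residue field is perfect of characteristic p. Let π be a uniformizer of K⁺, let K̄ be an algebraic closure of the fraction field of K⁺, and fix a sequence (π_n)_{n≥0} of elements of K̄ with π_0 = π and (π_{n+1})^p = π_n for all n. Let K⁺_∞ be the K⁺-subalgebra of K̄ generated by all the π_n (equivalently, the increasing union of the subrings K⁺[π_n]). Then the Frobenius endomorphism of K⁺_∞/pK⁺_∞ is surjective. -/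
/-!
Modulo `p` the `p`-th powers form a subring, so it suffices to see that the generators of `K⁺_∞`
are `p`-th powers mod `p`. For `π_n = π_{n+1} ^ p` this is clear. For `a ∈ K⁺`, perfectness of
the residue field gives `a ≡ b ^ p mod π`; iterating, `a` is congruent modulo `π ^ e` to a
polynomial in `π = π_1 ^ p` with `p`-th power coefficients, and `π ^ e` is a unit multiple
of `p`.
-/

theorem Ideal.exists_sub_pow_mem_of_surjective {A : Type*} [CommRing A] {I : Ideal A} {n : ℕ}
    (h : Function.Surjective fun x : A ⧸ I => x ^ n) (a : A) : ∃ b, a - b ^ n ∈ I := by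
  obtain ⟨y, hy⟩ := h (Ideal.Quotient.mk I a)
  obtain ⟨b, rfl⟩ := Ideal.Quotient.mk_surjective y
  exact ⟨b, Ideal.Quotient.eq.mp (by simpa only [map_pow] using hy.symm)⟩

theorem RingHom.map_mem_of_isNilpotent {A B : Type*} [CommRing A] [Ring B] (φ : A →+* B)
    {S : Subring B} {π : A} (hπ : φ π ∈ S) (hnil : IsNilpotent (φ π))
    (hdecomp : ∀ a, ∃ t, φ t ∈ S ∧ a - t ∈ Ideal.span {π}) (a : A) : φ a ∈ S := by
  obtain ⟨e, he⟩ := hnil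
  have approx : ∀ m a, ∃ s ∈ S, ∃ r, φ a = s + φ π ^ m * φ r := by
    intro m
    induction m with
    | zero => exact fun a => ⟨0, S.zero_mem, a, by simp⟩
    | succ m ih =>
      intro a
      obtain ⟨t, ht, hmem⟩ := hdecomp a
      obtain ⟨c, hc⟩ := Ideal.mem_span_singleton.mp hmem
      obtain ⟨s, hs, r, hr⟩ := ih c
      refine ⟨φ t + φ π * s, S.add_mem ht (S.mul_mem hπ hs), r, ?_⟩
      rw [← sub_add_cancel a t, hc, map_add, map_mul, hr, pow_succ', mul_assoc, mul_add]
      abel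
  obtain ⟨s, hs, r, hr⟩ := approx e a
  rwa [hr, he, zero_mul, add_zero]

theorem Subring.closure_closure_coe_preimage {R : Type*} [Ring R] {s : Set R} :
    closure (((↑) : closure s → R) ⁻¹' s) = ⊤ :=
  eq_top_iff.2 fun x _ ↦ Subtype.recOn x fun _ hx ↦
    closure_induction (fun _ h ↦ subset_closure h) (zero_mem _) (one_mem _)
      (fun _ _ _ _ ↦ add_mem) (fun _ _ ↦ neg_mem) (fun _ _ _ _ ↦ mul_mem) hx

theorem IsDiscreteValuationRing.map_mem_range_frobenius {A Q : Type*} [CommRing A] [IsDomain A]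
    [IsDiscreteValuationRing A] [CommRing Q] {p : ℕ} [Fact p.Prime] [CharP Q p]
    (hp : (p : A) ≠ 0) (hperf : Function.Surjective fun x : IsLocalRing.ResidueField A => x ^ p)
    {π : A} (hπ : Irreducible π) (φ : A →+* Q) (hφπ : φ π ∈ (frobenius Q p).range)
    (a : A) :
    φ a ∈ (frobenius Q p).range := by
  refine φ.map_mem_of_isNilpotent hφπ ?_ (fun a => ?_) a
  · obtain ⟨e, u, hu⟩ := associated_pow_irreducible hp hπ
    exact ⟨e, by rw [← map_pow, ← hu, map_mul, map_natCast, CharP.cast_eq_zero, zero_mul]⟩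
  · obtain ⟨b, hb⟩ := Ideal.exists_sub_pow_mem_of_surjective hperf a
    exact ⟨b ^ p, ⟨φ b, (map_pow φ b p).symm⟩, hπ.maximalIdeal_eq ▸ hb⟩

theorem statement6_general (p : ℕ) [Fact p.Prime]
    (Kp : Type*) [CommRing Kp] [IsDomain Kp] [IsDiscreteValuationRing Kp] [CharZero Kp]
    (hperf : Function.Bijective fun x : IsLocalRing.ResidueField Kp => x ^ p)
    (π : Kp) (hπ : Irreducible π)
    (Kbar : Type*) [Field Kbar] [Algebra (FractionRing Kp) Kbar]
    (πseq : ℕ → Kbar)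
    (hπ0 : πseq 0 = (algebraMap (FractionRing Kp) Kbar)
      (algebraMap Kp (FractionRing Kp) π))
    (hπs : ∀ n, πseq (n + 1) ^ p = πseq n) :
    Function.Surjective fun x :
        (Subring.closure (Set.range πseq ∪
          Set.range ((algebraMap (FractionRing Kp) Kbar).comp
            (algebraMap Kp (FractionRing Kp))))) ⧸
        (Ideal.span {(p : Subring.closure (Set.range πseq ∪
          Set.range ((algebraMap (FractionRing Kp) Kbar).comp
            (algebraMap Kp (FractionRing Kp)))))}) => x ^ p := by
  set f := (algebraMap (FractionRing Kp) Kbar).comp (algebraMap Kp (FractionRing Kp))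
  set R := Subring.closure (Set.range πseq ∪ Set.range f)
  set I : Ideal R := Ideal.span {(p : R)}
  have hp0 : (p : R ⧸ I) = 0 := by
    rw [← map_natCast (Ideal.Quotient.mk I), Ideal.Quotient.eq_zero_iff_mem]
    exact Ideal.mem_span_singleton_self _
  -- `R ⧸ I` may a priori be the zero ring, which does not have characteristic `p`.
  rcases subsingleton_or_nontrivial (R ⧸ I) with _ | _
  · exact Function.surjective_to_subsingleton _
  have : CharP (R ⧸ I) p := (CharP.charP_iff_prime_eq_zero Fact.out).mpr hp0
  have hπseq (n : ℕ) : πseq n ∈ R := Subring.subset_closure (.inl ⟨n, rfl⟩)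
  have hf (a : Kp) : f a ∈ R := Subring.subset_closure (.inr ⟨a, rfl⟩)
  have hπseq_frob (n : ℕ) :
      Ideal.Quotient.mk I ⟨πseq n, hπseq n⟩ ∈ (frobenius (R ⧸ I) p).range :=
    ⟨Ideal.Quotient.mk I ⟨πseq (n + 1), hπseq _⟩, by
      rw [frobenius_def, ← map_pow]; congr; exact Subtype.ext (hπs n)⟩
  suffices (frobenius (R ⧸ I) p).range.comap (Ideal.Quotient.mk I) = ⊤ by
    intro x
    obtain ⟨y, rfl⟩ := Ideal.Quotient.mk_surjective x
    exact (Subring.eq_top_iff' _).mp this y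
  rw [eq_top_iff, ← Subring.closure_closure_coe_preimage, Subring.closure_le]
  rintro ⟨_, _⟩ (⟨n, rfl⟩ | ⟨a, rfl⟩)
  · exact hπseq_frob n
  · refine IsDiscreteValuationRing.map_mem_range_frobenius
      (Nat.cast_ne_zero.mpr (Fact.out : p.Prime).ne_zero) hperf.2 hπ
      ((Ideal.Quotient.mk I).comp (f.codRestrict R hf)) ?_ a
    rw [RingHom.comp_apply,
      show f.codRestrict R hf π = ⟨πseq 0, hπseq 0⟩ from Subtype.ext hπ0.symm]
    exact hπseq_frob 0

/-- Let `p` be a prime and `K⁺` a complete discrete valuation ring of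
characteristic zero with perfect residue field of characteristic `p`.  Let `π` be a
uniformizer of `K⁺`, `K̄` an algebraic closure of the fraction field of `K⁺`, and
`(π_n)` a sequence in `K̄` with `π_0 = π` and `π_{n+1} ^ p = π_n`.  Let `K⁺_∞` be the
`K⁺`-subalgebra of `K̄` generated by all the `π_n` (the subring generated by the image
of `K⁺` together with the `π_n`).  Then the Frobenius endomorphism of
`K⁺_∞ / p K⁺_∞` is surjective. -/
theorem statement6 (p : ℕ) [Fact p.Prime]
    (Kp : Type*) [CommRing Kp] [IsDomain Kp] [IsDiscreteValuationRing Kp] [CharZero Kp]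
    [IsAdicComplete (IsLocalRing.maximalIdeal Kp) Kp]
    [CharP (IsLocalRing.ResidueField Kp) p]
    (hperf : Function.Bijective fun x : IsLocalRing.ResidueField Kp => x ^ p)
    (π : Kp) (hπ : Irreducible π)
    (Kbar : Type*) [Field Kbar] [Algebra (FractionRing Kp) Kbar]
    [IsAlgClosure (FractionRing Kp) Kbar]
    (πseq : ℕ → Kbar)
    (hπ0 : πseq 0 = (algebraMap (FractionRing Kp) Kbar)
      (algebraMap Kp (FractionRing Kp) π))
    (hπs : ∀ n, πseq (n + 1) ^ p = πseq n) :
    Function.Surjective fun x :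
        (Subring.closure (Set.range πseq ∪
          Set.range ((algebraMap (FractionRing Kp) Kbar).comp
            (algebraMap Kp (FractionRing Kp))))) ⧸
        (Ideal.span {(p : Subring.closure (Set.range πseq ∪
          Set.range ((algebraMap (FractionRing Kp) Kbar).comp
            (algebraMap Kp (FractionRing Kp)))))}) => x ^ p :=
  statement6_general p Kp hperf π hπ Kbar πseq hπ0 hπs
end

section
/- Let p be a prime and let A → B be an étale ring homomorphism between commutative rings of characteristic p (i.e. B is an étale A-algebra). If the Frobenius endomorphism of A is surjective, then the Frobenius endomorphism of B is surjective. -/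
/-!
Let `T = A[Bᵖ]` be the subalgebra generated by the `p`-th powers. Then `B` is finite over `T`
(each `x` is a root of `X ^ p - x ^ p`) and still formally unramified over `T`. In `B ⊗[T] B`
the element `x ⊗ 1 - 1 ⊗ x` has `p`-th power `x ^ p ⊗ 1 - 1 ⊗ x ^ p = 0`, so the two inclusions
`B → B ⊗[T] B` agree modulo a nilpotent ideal, hence agree by formal unramifiedness. Thus
`T → B` is a finite epimorphism, hence surjective: `T = B`. Finally, when Frobenius of `A` is
surjective, every element of `T` is a `p`-th power.
-/

universe u

open scoped TensorProduct

namespace Algebra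

variable {R S : Type*} [CommRing R] [CommRing S] [Algebra R S]

theorem FormallyUnramified.isEpi_of_isNilpotent_tmul_sub_tmul [FormallyUnramified R S]
    [FiniteType R S] (h : ∀ x : S, IsNilpotent (x ⊗ₜ[R] (1 : S) - 1 ⊗ₜ[R] x)) :
    Algebra.IsEpi R S := by
  obtain ⟨s, hs⟩ := FiniteType.out (R := R) (A := S)
  set I : Ideal (S ⊗[R] S) := Ideal.span ((fun x : S => x ⊗ₜ[R] (1 : S) - 1 ⊗ₜ[R] x) '' s)
  have hI : IsNilpotent I := by
    rw [Ideal.FG.isNilpotent_iff_le_nilradical (Submodule.fg_span (s.finite_toSet.image _)),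
      Ideal.span_le]
    rintro _ ⟨x, -, rfl⟩
    exact h x
  have hincl : (TensorProduct.includeLeft : S →ₐ[R] S ⊗[R] S) = TensorProduct.includeRight := by
    refine FormallyUnramified.lift_unique I hI _ _ (AlgHom.ext_of_adjoin_eq_top hs ?_)
    intro x hx
    exact Ideal.Quotient.eq.mpr (Ideal.subset_span ⟨x, hx, rfl⟩)
  exact (isEpi_iff_forall_one_tmul_eq R S).mpr fun x => (AlgHom.congr_fun hincl x).symm

theorem tmul_sub_tmul_pow_char_eq_zero (p : ℕ) [Fact p.Prime] [CharP S p] {x : S}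
    (hx : x ^ p ∈ (algebraMap R S).range) : (x ⊗ₜ[R] (1 : S) - 1 ⊗ₜ[R] x) ^ p = 0 := by
  rcases subsingleton_or_nontrivial (S ⊗[R] S) with _ | _
  · exact Subsingleton.elim _ _
  have : CharP (S ⊗[R] S) p := by
    rw [CharP.charP_iff_prime_eq_zero Fact.out, ← map_natCast TensorProduct.includeLeftRingHom,
      CharP.cast_eq_zero, map_zero]
  obtain ⟨r, hr⟩ := hx
  rw [sub_pow_char, TensorProduct.tmul_pow, TensorProduct.tmul_pow, one_pow, ← hr,
    TensorProduct.tmul_one_eq_one_tmul, sub_self]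

theorem adjoin_range_pow_char_eq_top (p : ℕ) [Fact p.Prime] [CharP S p]
    [FormallyUnramified R S] [FiniteType R S] : adjoin R (Set.range fun x : S => x ^ p) = ⊤ := by
  set T := adjoin R (Set.range fun x : S => x ^ p)
  have hpow (x : S) : x ^ p ∈ (algebraMap T S).range := ⟨⟨x ^ p, subset_adjoin ⟨x, rfl⟩⟩, rfl⟩
  have : FormallyUnramified T S := .of_restrictScalars R T S
  have : FiniteType T S := .of_restrictScalars_finiteType R T S
  have : Algebra.IsIntegral T S := by
    refine ⟨fun x => ?_⟩
    obtain ⟨t, ht⟩ := hpow x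
    exact ⟨Polynomial.X ^ p - Polynomial.C t,
      Polynomial.monic_X_pow_sub_C _ (Fact.out : p.Prime).ne_zero, by simp [ht]⟩
  have : Module.Finite T S := Algebra.IsIntegral.finite
  have hepi : Algebra.IsEpi T S := FormallyUnramified.isEpi_of_isNilpotent_tmul_sub_tmul
    fun x => ⟨p, tmul_sub_tmul_pow_char_eq_zero p (hpow x)⟩
  rw [← Subalgebra.range_val T, AlgHom.range_eq_top]
  exact isEpi_iff_surjective_algebraMap_of_finite.mp hepi

end Algebra

theorem statement7_general (p : ℕ) [Fact p.Prime] (A B : Type u) [CommRing A] [CommRing B]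
    [CharP B p] [Algebra A B] [Algebra.Etale A B]
    (hA : Function.Surjective fun x : A => x ^ p) :
    Function.Surjective fun x : B => x ^ p := by
  have hle : (Algebra.adjoin A (Set.range fun x : B => x ^ p)).toSubring ≤
      (frobenius B p).range := by
    rw [Algebra.adjoin_eq_ring_closure, Subring.closure_le]
    rintro _ (⟨a, rfl⟩ | ⟨x, rfl⟩)
    · obtain ⟨a', rfl⟩ := hA a
      exact ⟨algebraMap A B a', (map_pow _ _ _).symm⟩
    · exact ⟨x, rfl⟩
  intro b
  refine hle (?_ : b ∈ Algebra.adjoin A _)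
  rw [Algebra.adjoin_range_pow_char_eq_top]
  trivial

/-- Let `p` be a prime and let `A → B` be an étale ring homomorphism
between commutative rings of characteristic `p` (i.e. `B` is an étale `A`-algebra).
If the Frobenius endomorphism (`x ↦ x ^ p`) of `A` is surjective, then the Frobenius
endomorphism of `B` is surjective. -/
theorem statement7 (p : ℕ) [Fact p.Prime] (A B : Type u) [CommRing A] [CommRing B]
    [CharP A p] [CharP B p] [Algebra A B] [Algebra.Etale A B]
    (hA : Function.Surjective fun x : A => x ^ p) :
    Function.Surjective fun x : B => x ^ p :=
  statement7_general p A B hA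
end

section
/- Let p be a prime, B an integral domain of characteristic zero with fraction field F, and let Γ ⊆ F[X] be the B-subalgebra of the polynomial ring F[X] consisting of all polynomials of the form Σ_i b_i · X^i/i! with b_i ∈ B (the divided power polynomial algebra B⟨X⟩). Let ξ ∈ B be a nonzero element such that the principal ideal (ξ) is a prime ideal of B and p ∉ (ξ). Then for every n ∈ ℕ and every f ∈ Γ, if (ξ − X) · f ∈ p^n · Γ then f ∈ p^n · Γ. Consequently, the quotient ring Γ/(ξ − X)Γ is p-torsion free: any element of the quotient annihilated by p is zero. -/
open Polynomial

/-- The divided power polynomial algebra `B⟨X⟩`, realized as the `B`-subalgebra of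
`F[X]` (`F` the fraction field of `B`) consisting of all polynomials of the form
`Σ_i b_i · X ^ i / i !` with `b_i ∈ B`, i.e. those `f` with `i ! * f.coeff i` in the
image of `B` for all `i`. -/
def dpSubring (B : Type*) [CommRing B] [IsDomain B] [CharZero B] :
    Subring (Polynomial (FractionRing B)) where
  carrier := { f | ∀ i : ℕ, ∃ b : B,
    (i.factorial : FractionRing B) * f.coeff i = algebraMap B (FractionRing B) b }
  zero_mem' := fun i => ⟨0, by simp⟩
  one_mem' := fun i => by
    refine ⟨if i = 0 then 1 else 0, ?_⟩
    rcases eq_or_ne i 0 with h | h <;> simp [Polynomial.coeff_one, h]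
  add_mem' := by
    intro f g hf hg i
    obtain ⟨a, ha⟩ := hf i
    obtain ⟨b, hb⟩ := hg i
    exact ⟨a + b, by rw [Polynomial.coeff_add, mul_add, ha, hb, map_add]⟩
  neg_mem' := by
    intro f hf i
    obtain ⟨a, ha⟩ := hf i
    exact ⟨-a, by rw [Polynomial.coeff_neg, mul_neg, ha, map_neg]⟩
  mul_mem' := by
    intro f g hf hg
    simp only [Set.mem_setOf_eq] at hf hg ⊢
    intro i
    choose a ha using hf
    choose b hb using hg
    refine ⟨∑ jk ∈ Finset.HasAntidiagonal.antidiagonal i, (i.choose jk.1 : B) * (a jk.1 * b jk.2), ?_⟩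
    rw [Polynomial.coeff_mul, Finset.mul_sum, map_sum]
    refine Finset.sum_congr rfl fun jk hjk => ?_
    obtain ⟨j, k⟩ := jk
    rw [Finset.HasAntidiagonal.mem_antidiagonal] at hjk
    have hfac : (i.factorial : FractionRing B) =
        (i.choose j : FractionRing B) *
          ((j.factorial : FractionRing B) * (k.factorial : FractionRing B)) := by
      subst hjk
      have hsymm : (j + k).choose j = (j + k).choose k := by
        have := Nat.choose_symm (Nat.le_add_right j k)
        simpa [Nat.add_sub_cancel_left] using this.symm
      rw_mod_cast [← Nat.add_choose_mul_factorial_mul_factorial j k]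
      rw [hsymm]
      ring
    calc (i.factorial : FractionRing B) * (f.coeff j * g.coeff k)
        = (i.choose j : FractionRing B) *
          (((j.factorial : FractionRing B) * f.coeff j) *
            ((k.factorial : FractionRing B) * g.coeff k)) := by rw [hfac]; ring
      _ = algebraMap B (FractionRing B) ((i.choose j : B) * (a j * b k)) := by
          rw [ha, hb]
          push_cast [map_mul, map_natCast]
          ring

/-- The element `ξ − X` of `B⟨X⟩`. -/
theorem xi_sub_X_mem_dpSubring (B : Type*) [CommRing B] [IsDomain B] [CharZero B] (ξ : B) :
    Polynomial.C (algebraMap B (FractionRing B) ξ) - Polynomial.X ∈ dpSubring B := by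
  intro i
  match i with
  | 0 => exact ⟨ξ, by simp⟩
  | 1 => exact ⟨-1, by simp⟩
  | (i + 2) => exact ⟨0, by simp [Polynomial.coeff_X, Polynomial.coeff_C]⟩

/-!
Write `i ! * f.coeff i = a i` and `i ! * g.coeff i = b i` with `a i, b i ∈ B`. Comparing
coefficients in `(ξ - X) * f = c * g` and clearing factorials gives `ξ * a 0 = c * b 0` and
`ξ * a (i + 1) = c * b (i + 1) + (i + 1) * a i`. As `ξ` is prime and does not divide
`c = p ^ n`, a relation `ξ * x = c * m` forces `ξ ∣ m` and hence `c ∣ x`; so by induction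
`c ∣ a i` for all `i`, i.e. `f ∈ c • B⟨X⟩`. The statement about the quotient is the case
`n = 1`, since `B⟨X⟩` is a domain.
-/

theorem Prime.dvd_of_mul_eq_mul_of_not_dvd {R : Type*} [CommMonoidWithZero R] [IsCancelMulZero R]
    {ξ c x m : R} (hξ : Prime ξ) (hc : ¬ ξ ∣ c) (h : ξ * x = c * m) : c ∣ x := by
  obtain ⟨m', rfl⟩ : ξ ∣ m := (hξ.dvd_or_dvd ⟨x, h.symm⟩).resolve_left hc
  exact ⟨m', mul_left_cancel₀ hξ.ne_zero (by rw [h, mul_left_comm])⟩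

theorem Ideal.Quotient.eq_zero_of_mk_mul_eq_zero {R : Type*} [CommRing R] [IsDomain R] {a r : R}
    (hr : r ≠ 0) (hdvd : ∀ f, r ∣ a * f → r ∣ f) (y : R ⧸ Ideal.span {a})
    (hy : Ideal.Quotient.mk _ r * y = 0) : y = 0 := by
  obtain ⟨f, rfl⟩ := Ideal.Quotient.mk_surjective y
  rw [← map_mul, Ideal.Quotient.eq_zero_iff_mem, Ideal.mem_span_singleton] at hy
  obtain ⟨g, hg⟩ := hy
  obtain ⟨g', rfl⟩ := hdvd g ⟨f, hg.symm⟩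
  refine Ideal.Quotient.eq_zero_iff_mem.mpr (Ideal.mem_span_singleton.mpr ⟨g', ?_⟩)
  exact mul_left_cancel₀ hr (by rw [hg, mul_left_comm])

namespace dpSubring

variable {B : Type*} [CommRing B] [IsDomain B] [CharZero B]

local notation "F" => FractionRing B

theorem exists_eq_C_mul {c : B} (hc : c ≠ 0) {f : F[X]}
    (hf : ∀ i : ℕ, ∃ d : B, (i.factorial : F) * f.coeff i = algebraMap B F (c * d)) :
    ∃ h ∈ dpSubring B, f = C (algebraMap B F c) * h := by
  have hcF : algebraMap B F c ≠ 0 := (map_ne_zero_iff _ (IsFractionRing.injective B F)).mpr hc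
  refine ⟨C (algebraMap B F c)⁻¹ * f, fun i => ?_, ?_⟩
  · obtain ⟨d, hd⟩ := hf i
    refine ⟨d, ?_⟩
    rw [coeff_C_mul, mul_left_comm, hd, map_mul, inv_mul_cancel_left₀ hcF]
  · rw [← mul_assoc, ← C_mul, mul_inv_cancel₀ hcF, C_1, one_mul]

theorem exists_eq_C_mul_of_C_sub_X_mul_eq {ξ c : B} (hξ : Prime ξ) (hc : ¬ ξ ∣ c)
    {f g : F[X]} (hf : f ∈ dpSubring B) (hg : g ∈ dpSubring B)
    (heq : (C (algebraMap B F ξ) - X) * f = C (algebraMap B F c) * g) :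
    ∃ h ∈ dpSubring B, f = C (algebraMap B F c) * h := by
  choose a ha using hf
  choose b hb using hg
  have inj := IsFractionRing.injective B F
  have hrec_zero : ξ * a 0 = c * b 0 := inj <| by
    have h := congrArg (coeff · 0) heq
    simp only [sub_mul, coeff_sub, mul_coeff_zero, coeff_X_zero, zero_mul, sub_zero] at h
    simpa [← ha 0, ← hb 0] using h
  have hrec_succ : ∀ i : ℕ, ξ * a (i + 1) = c * b (i + 1) + (i + 1) * a i := fun i => inj <| by
    have h := congrArg (coeff · (i + 1)) heq
    simp only [sub_mul, coeff_sub, coeff_C_mul, coeff_X_mul] at h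
    have hfac : ((i + 1).factorial : F) = ((i : F) + 1) * i.factorial := by
      push_cast [Nat.factorial_succ]; ring
    simp only [map_mul, map_add, map_natCast, map_one, ← ha, ← hb, hfac]
    linear_combination ((i : F) + 1) * i.factorial * h
  have hdvd : ∀ i, c ∣ a i := by
    intro i
    induction i with
    | zero => exact hξ.dvd_of_mul_eq_mul_of_not_dvd hc hrec_zero
    | succ i ih =>
      obtain ⟨d, hd⟩ := ih
      exact hξ.dvd_of_mul_eq_mul_of_not_dvd hc (m := b (i + 1) + (i + 1) * d)
        (by rw [hrec_succ, hd]; ring)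
  refine exists_eq_C_mul (by rintro rfl; exact hc (dvd_zero ξ)) fun i => ?_
  obtain ⟨d, hd⟩ := hdvd i
  exact ⟨d, hd ▸ ha i⟩

theorem natCast_pow_dvd_of_dvd_C_sub_X_mul {ξ : B} (hξ : Prime ξ) {p : ℕ}
    (hp : ¬ ξ ∣ (p : B)) (n : ℕ) {f : dpSubring B}
    (h : (p : dpSubring B) ^ n ∣
      (⟨C (algebraMap B F ξ) - X, xi_sub_X_mem_dpSubring B ξ⟩ : dpSubring B) * f) :
    (p : dpSubring B) ^ n ∣ f := by
  obtain ⟨g, hg⟩ := h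
  have hpn : (↑((p : dpSubring B) ^ n) : F[X]) = C (algebraMap B F ((p : B) ^ n)) := by simp
  obtain ⟨h, hmem, hfh⟩ := exists_eq_C_mul_of_C_sub_X_mul_eq hξ
    (fun hdvd => hp (hξ.dvd_of_dvd_pow hdvd)) f.2 g.2
    (by rw [← hpn]; exact congrArg Subtype.val hg)
  exact ⟨⟨h, hmem⟩, Subtype.ext (by rw [Subring.coe_mul, hpn]; exact hfh)⟩

end dpSubring

theorem statement14_general (p : ℕ) (B : Type*) [CommRing B] [IsDomain B]
    [CharZero B] (ξ : B) (hξ0 : ξ ≠ 0) (hξprime : (Ideal.span {ξ} : Ideal B).IsPrime)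
    (hpξ : (p : B) ∉ Ideal.span {ξ}) :
    (∀ (n : ℕ) (f : dpSubring B),
      (p : dpSubring B) ^ n ∣
          (⟨Polynomial.C (algebraMap B (FractionRing B) ξ) - Polynomial.X,
            xi_sub_X_mem_dpSubring B ξ⟩ : dpSubring B) * f →
        (p : dpSubring B) ^ n ∣ f) ∧
    ∀ y : (dpSubring B) ⧸ (Ideal.span
        {(⟨Polynomial.C (algebraMap B (FractionRing B) ξ) - Polynomial.X,
            xi_sub_X_mem_dpSubring B ξ⟩ : dpSubring B)}),
      (p : (dpSubring B) ⧸ (Ideal.span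
        {(⟨Polynomial.C (algebraMap B (FractionRing B) ξ) - Polynomial.X,
            xi_sub_X_mem_dpSubring B ξ⟩ : dpSubring B)})) * y = 0 → y = 0 := by
  have hξ : Prime ξ := (Ideal.span_singleton_prime hξ0).mp hξprime
  have hp : ¬ ξ ∣ (p : B) := fun h => hpξ (Ideal.mem_span_singleton.mpr h)
  have hdvd := fun n (f : dpSubring B) =>
    dpSubring.natCast_pow_dvd_of_dvd_C_sub_X_mul hξ hp n (f := f)
  have hp0 : (p : dpSubring B) ≠ 0 := Nat.cast_ne_zero.mpr (by rintro rfl; exact hp (by simp))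
  refine ⟨hdvd, fun y hy =>
    Ideal.Quotient.eq_zero_of_mk_mul_eq_zero hp0 (by simpa using hdvd 1) y ?_⟩
  rwa [map_natCast]

/-- Let `p` be a prime, `B` an integral domain of characteristic zero
with fraction field `F`, and `Γ = B⟨X⟩ ⊆ F[X]` the divided power polynomial algebra.
Let `ξ ∈ B` be nonzero such that `(ξ)` is a prime ideal of `B` and `p ∉ (ξ)`.  Then for
every `n` and every `f ∈ Γ`, if `(ξ − X) · f ∈ p ^ n · Γ` then `f ∈ p ^ n · Γ`;
consequently the quotient `Γ/(ξ − X)Γ` is `p`-torsion free. -/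
theorem statement14 (p : ℕ) (hp : p.Prime) (B : Type*) [CommRing B] [IsDomain B]
    [CharZero B] (ξ : B) (hξ0 : ξ ≠ 0) (hξprime : (Ideal.span {ξ} : Ideal B).IsPrime)
    (hpξ : (p : B) ∉ Ideal.span {ξ}) :
    (∀ (n : ℕ) (f : dpSubring B),
      (p : dpSubring B) ^ n ∣
          (⟨Polynomial.C (algebraMap B (FractionRing B) ξ) - Polynomial.X,
            xi_sub_X_mem_dpSubring B ξ⟩ : dpSubring B) * f →
        (p : dpSubring B) ^ n ∣ f) ∧
    ∀ y : (dpSubring B) ⧸ (Ideal.span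
        {(⟨Polynomial.C (algebraMap B (FractionRing B) ξ) - Polynomial.X,
            xi_sub_X_mem_dpSubring B ξ⟩ : dpSubring B)}),
      (p : (dpSubring B) ⧸ (Ideal.span
        {(⟨Polynomial.C (algebraMap B (FractionRing B) ξ) - Polynomial.X,
            xi_sub_X_mem_dpSubring B ξ⟩ : dpSubring B)})) * y = 0 → y = 0 :=
  statement14_general p B ξ hξ0 hξprime hpξ
end

section
/- Let V be a discrete valuation ring with fraction field K and uniformizer ϖ, and let 1 ≤ r ≤ d + 1. Then there is a K-algebra isomorphism from O(V, ϖ) ⊗_V K onto the Laurent polynomial ring K[X₂^{±1}, …, X_{d+1}^{±1}] determined by T₁ ↦ ϖ·(X₂⋯X_r)^{-1} and T_i ↦ X_i for 2 ≤ i ≤ d + 1. -/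
/-!
Over any `V`-algebra `K` in which `c` becomes a unit, the relation `T₁ ⋯ T_r = c` forces
`T₁, …, T_r` to be units as well, and it determines `T₁ = c · (T₂ ⋯ T_r)⁻¹` from the other
variables. Hence `K ⊗_V O(V, c)` is freely generated as a `K`-algebra by the units
`T₂, …, T_{d+1}`, which is the universal property of the Laurent polynomial ring. For a DVR,
`K = Frac V` and `c = ϖ ≠ 0` is such a case.
-/

open scoped BigOperators TensorProduct

/-- The multiplicative set of the variables `T_{r+1}, …, T_{d+1}` (indices `i` of
`Fin (d+1)` with `r ≤ i`, the variable `T_{i+1}` corresponding to the index `i`)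
in the polynomial ring `V[T₁, …, T_{d+1}]`. -/
noncomputable def oringSubmonoid (V : Type*) [CommRing V] (d r : ℕ) :
    Submonoid (MvPolynomial (Fin (d + 1)) V) :=
  Submonoid.closure ((fun i => MvPolynomial.X i) '' {i : Fin (d + 1) | r ≤ (i : ℕ)})

/-- The ideal generated by the relation `T₁ ⋯ T_r − c` in
`V[T₁, …, T_{d+1}][(T_{r+1} ⋯ T_{d+1})⁻¹]`. -/
noncomputable def oringRelation (V : Type*) [CommRing V] (c : V) (d r : ℕ) :
    Ideal (Localization (oringSubmonoid V d r)) :=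
  Ideal.span {algebraMap (MvPolynomial (Fin (d + 1)) V) (Localization (oringSubmonoid V d r))
      ((∏ i ∈ Finset.univ.filter fun i : Fin (d + 1) => (i : ℕ) < r, MvPolynomial.X i)
        - MvPolynomial.C c)}

/-- For a commutative ring `V`, an element `c ∈ V` and integers `1 ≤ r ≤ d + 1`,
`Oring V c d r` is the ring
`V[T₁, …, T_{d+1}][(T_{r+1} ⋯ T_{d+1})⁻¹] / (T₁ ⋯ T_r − c)`:
the polynomial ring over `V` in `d + 1` variables, with the variables
`T_{r+1}, …, T_{d+1}` inverted, modulo the relation `T₁ ⋯ T_r = c`. -/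
def Oring (V : Type*) [CommRing V] (c : V) (d r : ℕ) : Type _ :=
  Localization (oringSubmonoid V d r) ⧸ oringRelation V c d r

noncomputable instance (V : Type*) [CommRing V] (c : V) (d r : ℕ) :
    CommRing (Oring V c d r) :=
  Ideal.Quotient.commRing _

noncomputable instance (V : Type*) [CommRing V] (c : V) (d r : ℕ) :
    Algebra V (Oring V c d r) :=
  inferInstanceAs (Algebra V (Localization (oringSubmonoid V d r) ⧸ oringRelation V c d r))

/-- The canonical map `V → Oring V c d r`. -/
noncomputable def oringC (V : Type*) [CommRing V] (c : V) (d r : ℕ) : V →+* Oring V c d r :=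
  algebraMap V (Oring V c d r)

/-- The class of the variable `T_{i+1}` in `Oring V c d r`. -/
noncomputable def oringX (V : Type*) [CommRing V] (c : V) (d r : ℕ) (i : Fin (d + 1)) :
    Oring V c d r :=
  Ideal.Quotient.mk (oringRelation V c d r)
    (algebraMap (MvPolynomial (Fin (d + 1)) V) (Localization (oringSubmonoid V d r))
      (MvPolynomial.X i))


/-- The Laurent polynomial ring `K[X₂^{±1}, …, X_{d+1}^{±1}]` in `d` variables (the
variable `X_{j+2}` corresponding to the index `j` of `Fin d`): the localization of the
polynomial ring `K[X₂, …, X_{d+1}]` at the multiplicative set generated by the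
variables. -/
abbrev LaurentRing (K : Type*) [CommRing K] (d : ℕ) : Type _ :=
  Localization (Submonoid.closure
    (Set.range (MvPolynomial.X : Fin d → MvPolynomial (Fin d) K)))

/-- The variable `X_{j+2}` of the Laurent polynomial ring. -/
noncomputable def laurentX (K : Type*) [CommRing K] (d : ℕ) (j : Fin d) :
    LaurentRing K d :=
  algebraMap (MvPolynomial (Fin d) K) (LaurentRing K d) (MvPolynomial.X j)

open MvPolynomial

theorem IsUnit.map_of_mem_closure {M N F : Type*} [Monoid M] [Monoid N] [FunLike F M N]
    [MonoidHomClass F M N] (f : F) {s : Set M} (hs : ∀ x ∈ s, IsUnit (f x)) {x : M}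
    (hx : x ∈ Submonoid.closure s) : IsUnit (f x) :=
  Submonoid.closure_le (S := (IsUnit.submonoid N).comap f).mpr hs hx

theorem Fin.prod_filter_lt_eq_mul {M : Type*} [CommMonoid M] {d r : ℕ} (hr : 1 ≤ r)
    (g : Fin (d + 1) → M) :
    ∏ i ∈ Finset.univ.filter (fun i : Fin (d + 1) => (i : ℕ) < r), g i =
      g 0 * ∏ j ∈ Finset.univ.filter (fun j : Fin d => (j : ℕ) + 2 ≤ r), g j.succ := by
  rw [Finset.prod_filter, Fin.prod_univ_succ, Finset.prod_filter,
    if_pos (by simp only [Fin.val_zero]; omega)]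
  congr 1

namespace Oring

variable {V : Type*} [CommRing V] {c : V} {d r : ℕ} {B : Type*} [CommRing B] [Algebra V B]

theorem prod_oringX :
    ∏ i ∈ Finset.univ.filter (fun i : Fin (d + 1) => (i : ℕ) < r), oringX V c d r i =
      algebraMap V (Oring V c d r) c := by
  let π : MvPolynomial (Fin (d + 1)) V →ₐ[V] Oring V c d r :=
    (Ideal.Quotient.mkₐ V (oringRelation V c d r)).comp (IsScalarTower.toAlgHom V _ _)
  have h : π ((∏ i ∈ Finset.univ.filter fun i : Fin (d + 1) => (i : ℕ) < r, X i) - C c) = 0 :=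
    Ideal.Quotient.eq_zero_iff_mem.mpr (Ideal.subset_span rfl)
  rw [map_sub, sub_eq_zero, map_prod, MvPolynomial.algHom_C] at h
  exact h

theorem isUnit_oringX {i : Fin (d + 1)} (hi : r ≤ (i : ℕ)) : IsUnit (oringX V c d r i) :=
  (IsLocalization.map_units (M := oringSubmonoid V d r) _
    ⟨X i, Submonoid.subset_closure ⟨i, hi, rfl⟩⟩).map (Ideal.Quotient.mk _)

section lift

variable (t : Fin (d + 1) → B) (ht : ∀ i : Fin (d + 1), r ≤ (i : ℕ) → IsUnit (t i))
  (hprod : ∏ i ∈ Finset.univ.filter (fun i : Fin (d + 1) => (i : ℕ) < r), t i =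
    algebraMap V B c)

noncomputable def lift : Oring V c d r →ₐ[V] B :=
  Ideal.Quotient.liftₐ (oringRelation V c d r)
    (IsLocalization.liftAlgHom (M := oringSubmonoid V d r) (f := aeval t) fun s =>
      IsUnit.map_of_mem_closure (aeval t)
        (Set.forall_mem_image.2 fun i hi => by rw [aeval_X]; exact ht i hi) s.2) (by
    intro a ha
    obtain ⟨b, rfl⟩ := Ideal.mem_span_singleton'.mp ha
    simp [IsLocalization.lift_eq, hprod])

theorem lift_oringX (i : Fin (d + 1)) : lift t ht hprod (oringX V c d r i) = t i :=
  (IsLocalization.lift_eq _ _).trans (aeval_X t i)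

end lift

theorem algHom_ext {f g : Oring V c d r →ₐ[V] B}
    (h : ∀ i, f (oringX V c d r i) = g (oringX V c d r i)) : f = g :=
  Ideal.Quotient.algHom_ext V
    (IsLocalization.algHom_ext (oringSubmonoid V d r) (MvPolynomial.algHom_ext h))

theorem isUnit_map_oringX (f : Oring V c d r →ₐ[V] B) (hc : IsUnit (algebraMap V B c))
    (i : Fin (d + 1)) : IsUnit (f (oringX V c d r i)) := by
  rcases le_or_gt r i with hi | hi
  · exact (isUnit_oringX hi).map f
  · have hprod : IsUnit (∏ i ∈ Finset.univ.filter (fun i : Fin (d + 1) => (i : ℕ) < r),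
        f (oringX V c d r i)) := by
      rwa [← map_prod, prod_oringX, f.commutes]
    exact IsUnit.prod_iff.mp hprod i (Finset.mem_filter.mpr ⟨Finset.mem_univ i, hi⟩)

/-- Once `c` is a unit, `T₁ = c · (T₂ ⋯ T_r)⁻¹` is determined by the other variables. -/
theorem algHom_ext_of_isUnit (hr : 1 ≤ r) (hc : IsUnit (algebraMap V B c))
    {f g : Oring V c d r →ₐ[V] B}
    (h : ∀ j : Fin d, f (oringX V c d r j.succ) = g (oringX V c d r j.succ)) : f = g := by
  have relation (φ : Oring V c d r →ₐ[V] B) : φ (oringX V c d r 0) *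
      ∏ j ∈ Finset.univ.filter (fun j : Fin d => (j : ℕ) + 2 ≤ r), φ (oringX V c d r j.succ) =
        algebraMap V B c := by
    rw [← Fin.prod_filter_lt_eq_mul hr (fun i => φ (oringX V c d r i)), ← map_prod, prod_oringX,
      φ.commutes]
  have hunit : IsUnit (∏ j ∈ Finset.univ.filter (fun j : Fin d => (j : ℕ) + 2 ≤ r),
      g (oringX V c d r j.succ)) :=
    IsUnit.prod_iff.mpr fun j _ => isUnit_map_oringX g hc j.succ
  refine algHom_ext fun i => Fin.cases (hunit.mul_right_cancel ?_) h i
  rw [relation g, ← relation f]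
  simp only [h]

end Oring

namespace LaurentRing

variable {K : Type*} [CommRing K] {d : ℕ} {B : Type*} [CommRing B] [Algebra K B]

theorem isUnit_laurentX (j : Fin d) : IsUnit (laurentX K d j) :=
  IsLocalization.map_units (M := Submonoid.closure (Set.range X)) _
    ⟨X j, Submonoid.subset_closure ⟨j, rfl⟩⟩

noncomputable def lift (u : Fin d → B) (hu : ∀ j, IsUnit (u j)) : LaurentRing K d →ₐ[K] B :=
  IsLocalization.liftAlgHom (M := Submonoid.closure (Set.range X)) (f := aeval u) fun s =>
    IsUnit.map_of_mem_closure (aeval u)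
      (Set.forall_mem_range.2 fun j => by rw [aeval_X]; exact hu j) s.2

theorem lift_laurentX (u : Fin d → B) (hu : ∀ j, IsUnit (u j)) (j : Fin d) :
    lift u hu (laurentX K d j) = u j :=
  (IsLocalization.lift_eq _ _).trans (aeval_X u j)

theorem algHom_ext {f g : LaurentRing K d →ₐ[K] B}
    (h : ∀ j, f (laurentX K d j) = g (laurentX K d j)) : f = g :=
  IsLocalization.algHom_ext (Submonoid.closure (Set.range X)) (MvPolynomial.algHom_ext h)

end LaurentRing

namespace Oring

variable {V : Type*} [CommRing V] (K : Type*) [CommRing K] [Algebra V K] (c : V) (d r : ℕ)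

noncomputable def laurentVar : Fin (d + 1) → LaurentRing K d :=
  Fin.cases
    (algebraMap V _ c * Ring.inverse
      (∏ j ∈ Finset.univ.filter (fun j : Fin d => (j : ℕ) + 2 ≤ r), laurentX K d j))
    (laurentX K d)

theorem laurentVar_zero_mul_prod :
    laurentVar K c d r 0 *
        ∏ j ∈ Finset.univ.filter (fun j : Fin d => (j : ℕ) + 2 ≤ r), laurentX K d j =
      algebraMap V _ c := by
  rw [laurentVar, Fin.cases_zero, mul_assoc, Ring.inverse_mul_cancel _
    (IsUnit.prod_iff.mpr fun j _ => LaurentRing.isUnit_laurentX j), mul_one]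

theorem laurentVar_succ (j : Fin d) : laurentVar K c d r j.succ = laurentX K d j :=
  Fin.cases_succ _

variable {K c d r}

noncomputable def toLaurent (hr : 1 ≤ r) : K ⊗[V] Oring V c d r →ₐ[K] LaurentRing K d :=
  Algebra.TensorProduct.lift (Algebra.ofId K _)
    (lift (laurentVar K c d r)
      (fun i hi => by
        cases i using Fin.cases with
        | zero => simp only [Fin.val_zero] at hi; omega
        | succ j => exact LaurentRing.isUnit_laurentX j)
      (by rw [Fin.prod_filter_lt_eq_mul hr]; exact laurentVar_zero_mul_prod K c d r))
    fun _ _ => Commute.all _ _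

theorem toLaurent_one_tmul (hr : 1 ≤ r) (i : Fin (d + 1)) :
    toLaurent hr (1 ⊗ₜ oringX V c d r i) = laurentVar K c d r i := by
  rw [toLaurent, Algebra.TensorProduct.lift_tmul, map_one, one_mul, lift_oringX]

theorem isUnit_algebraMap_tensorProduct (hc : IsUnit (algebraMap V K c)) :
    IsUnit (algebraMap V (K ⊗[V] Oring V c d r) c) := by
  rw [IsScalarTower.algebraMap_apply V K]
  exact hc.map _

noncomputable def ofLaurent (hc : IsUnit (algebraMap V K c)) :
    LaurentRing K d →ₐ[K] K ⊗[V] Oring V c d r :=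
  LaurentRing.lift (fun j => 1 ⊗ₜ oringX V c d r j.succ) fun j =>
    isUnit_map_oringX Algebra.TensorProduct.includeRight (isUnit_algebraMap_tensorProduct hc)
      j.succ

theorem ofLaurent_laurentX (hc : IsUnit (algebraMap V K c)) (j : Fin d) :
    ofLaurent hc (laurentX K d j) = 1 ⊗ₜ oringX V c d r j.succ :=
  LaurentRing.lift_laurentX _ _ j

noncomputable def equivLaurent (hc : IsUnit (algebraMap V K c)) (hr : 1 ≤ r) :
    K ⊗[V] Oring V c d r ≃ₐ[K] LaurentRing K d :=
  AlgEquiv.ofAlgHom (toLaurent hr) (ofLaurent hc)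
    (LaurentRing.algHom_ext fun j => by
      rw [AlgHom.comp_apply, ofLaurent_laurentX, toLaurent_one_tmul]
      rfl)
    (Algebra.TensorProduct.ext (Subsingleton.elim _ _)
      (algHom_ext_of_isUnit hr (isUnit_algebraMap_tensorProduct hc) fun j => by
        simp only [AlgHom.comp_apply, AlgHom.restrictScalars_apply,
          Algebra.TensorProduct.includeRight_apply, toLaurent_one_tmul]
        rw [laurentVar_succ, ofLaurent_laurentX]
        rfl))

theorem equivLaurent_one_tmul (hc : IsUnit (algebraMap V K c)) (hr : 1 ≤ r) (i : Fin (d + 1)) :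
    equivLaurent hc hr (1 ⊗ₜ oringX V c d r i) = laurentVar K c d r i := by
  rw [equivLaurent, AlgEquiv.ofAlgHom_apply, toLaurent_one_tmul]

end Oring

theorem statement15_general (V : Type*) [CommRing V] [IsDomain V]
    (ϖ : V) (hϖ : Irreducible ϖ) (d r : ℕ) (hr : 1 ≤ r) :
    ∃ e : (FractionRing V ⊗[V] Oring V ϖ d r) ≃ₐ[FractionRing V]
        LaurentRing (FractionRing V) d,
      (e (1 ⊗ₜ oringX V ϖ d r ⟨0, Nat.succ_pos d⟩) *
          ∏ j ∈ Finset.univ.filter fun j : Fin d => (j : ℕ) + 2 ≤ r,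
            laurentX (FractionRing V) d j =
        algebraMap (FractionRing V) (LaurentRing (FractionRing V) d)
          (algebraMap V (FractionRing V) ϖ)) ∧
      ∀ (i : Fin (d + 1)) (j : Fin d), (i : ℕ) = (j : ℕ) + 1 →
        e (1 ⊗ₜ oringX V ϖ d r i) = laurentX (FractionRing V) d j := by
  have hunit : IsUnit (algebraMap V (FractionRing V) ϖ) :=
    IsLocalization.map_units _ ⟨ϖ, mem_nonZeroDivisors_of_ne_zero hϖ.ne_zero⟩
  refine ⟨Oring.equivLaurent hunit hr, ?_, fun i j hij => ?_⟩
  · rw [← IsScalarTower.algebraMap_apply V (FractionRing V)]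
    exact (congrArg (· * _) (Oring.equivLaurent_one_tmul hunit hr 0)).trans
      (Oring.laurentVar_zero_mul_prod _ _ _ _)
  · obtain rfl : i = j.succ := Fin.ext (by rw [hij, Fin.val_succ])
    rw [Oring.equivLaurent_one_tmul, Oring.laurentVar_succ]

/-- Let `V` be a discrete valuation ring with fraction field `K` and
uniformizer `ϖ`, and let `1 ≤ r ≤ d + 1`.  Then there is a `K`-algebra isomorphism from
`O(V, ϖ) ⊗_V K` onto the Laurent polynomial ring `K[X₂^{±1}, …, X_{d+1}^{±1}]`
determined by `T₁ ↦ ϖ · (X₂ ⋯ X_r)⁻¹` (expressed below, multiplicatively, as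
`e(T₁) · (X₂ ⋯ X_r) = ϖ`, the `X_j` being units) and `T_i ↦ X_i` for `2 ≤ i ≤ d + 1`. -/
theorem statement15 (V : Type*) [CommRing V] [IsDomain V] [IsDiscreteValuationRing V]
    (ϖ : V) (hϖ : Irreducible ϖ) (d r : ℕ) (hr : 1 ≤ r) (hrd : r ≤ d + 1) :
    ∃ e : (FractionRing V ⊗[V] Oring V ϖ d r) ≃ₐ[FractionRing V]
        LaurentRing (FractionRing V) d,
      (e (1 ⊗ₜ oringX V ϖ d r ⟨0, Nat.succ_pos d⟩) *
          ∏ j ∈ Finset.univ.filter fun j : Fin d => (j : ℕ) + 2 ≤ r,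
            laurentX (FractionRing V) d j =
        algebraMap (FractionRing V) (LaurentRing (FractionRing V) d)
          (algebraMap V (FractionRing V) ϖ)) ∧
      ∀ (i : Fin (d + 1)) (j : Fin d), (i : ℕ) = (j : ℕ) + 1 →
        e (1 ⊗ₜ oringX V ϖ d r i) = laurentX (FractionRing V) d j :=
  statement15_general V ϖ hϖ d r hr
end
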